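/- For every ICGS I, every initial path ρ, every assignment χ, and every agent a: a strategy σ is weakly uniform for a in ρ if and only if I, χ[a ↦ σ], ρ ⊨_ESL (a_1,?)…(a_k,?) AG ⋁_{c ∈ Act} K_a AX p^a_c, where {a_1,…,a_k} = Ag ∖ {a}. -/
import Mathlib


/-- A concurrent game structure: transition function, initial state, valuation. -/
structure CGS (S Ag Act AP : Type) where
  δ : S → (Ag → Act) → S
  init : S
  val : S → AP → Prop

variable {S Ag Act AP Var : Type}

/-- An initial (finite) path: a start state together with the list of decisions taken. -/
abbrev FPath (S Ag Act : Type) := S × List (Ag → Act)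

/-- Last state of an initial path. -/
def CGS.lastState (G : CGS S Ag Act AP) (ρ : FPath S Ag Act) : S :=
  ρ.2.foldl G.δ ρ.1

/-- A strategy assigns an action to every initial path. -/
abbrev Strat (S Ag Act : Type) := FPath S Ag Act → Act

/-- Concatenation of initial paths (meaningful when `G.lastState ρ = ρ'.1`,
i.e. they are glued at the shared state). -/
def FPath.concat (ρ ρ' : FPath S Ag Act) : FPath S Ag Act := (ρ.1, ρ.2 ++ ρ'.2)

/-- The finite prefix with `n` decisions of the play from `q` whose decision stream is `d`. -/
def prefixPath (q : S) (d : ℕ → Ag → Act) (n : ℕ) : FPath S Ag Act :=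
  (q, List.ofFn fun i : Fin n => d i)

/-- The state reached after `i` steps of the play from `q` with decision stream `d`. -/
def stateAt (G : CGS S Ag Act AP) (q : S) (d : ℕ → Ag → Act) (i : ℕ) : S :=
  G.lastState (prefixPath q d i)

/-- An assignment: a partial map from agents and variables to strategies. -/
abbrev Assign (S Ag Act Var : Type) := Ag ⊕ Var → Option (Strat S Ag Act)

/-- The outcome of an assignment from a state: the set of plays (identified with
their decision streams) compatible with all strategies assigned to agents. -/
def outcome (G : CGS S Ag Act AP) (q : S) (χ : Assign S Ag Act Var) :
    Set (ℕ → Ag → Act) :=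
  {d | ∀ (k : ℕ) (a : Ag) (σ : Strat S Ag Act),
      χ (Sum.inl a) = some σ → d k a = σ (prefixPath q d k)}

/-- The `ρ`-translation of a strategy. -/
def transStrat [DecidableEq S] (G : CGS S Ag Act AP) (ρ : FPath S Ag Act)
    (σ : Strat S Ag Act) : Strat S Ag Act :=
  fun ρ' => if ρ'.1 = G.lastState ρ then σ (ρ.concat ρ') else σ ρ'

/-- The `ρ`-translation of an assignment. -/
def transAssign [DecidableEq S] (G : CGS S Ag Act AP) (ρ : FPath S Ag Act)
    (χ : Assign S Ag Act Var) : Assign S Ag Act Var :=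
  fun l => (χ l).map (transStrat G ρ)

/-- An imperfect information CGS: a CGS with an indistinguishability
equivalence relation on initial paths for each agent. -/
structure ICGS (S Ag Act AP : Type) extends CGS S Ag Act AP where
  rel : Ag → FPath S Ag Act → FPath S Ag Act → Prop
  rel_equiv : ∀ a, Equivalence (rel a)

/-- The initial path obtained by extending `ρ` with the first `i` decisions of
the stream `d`. -/
def extFPath (ρ : FPath S Ag Act) (d : ℕ → Ag → Act) (i : ℕ) : FPath S Ag Act :=
  (ρ.1, ρ.2 ++ List.ofFn fun t : Fin i => d t)

/-- Outcome of an assignment from an initial path: plays extending `ρ` (given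
by their decision streams) in which each bound agent follows its strategy,
evaluated on the full history. -/
def outcomeFrom (χ : Assign S Ag Act Var) (ρ : FPath S Ag Act) :
    Set (ℕ → Ag → Act) :=
  {d | ∀ (k : ℕ) (a : Ag) (σ : Strat S Ag Act),
      χ (Sum.inl a) = some σ → d k a = σ (extFPath ρ d k)}

mutual
/-- State formulas of Epistemic Strategy Logic (ESL). `act a c` is the action
proposition `p^a_c` ("agent `a` just played action `c`"), and `know A` is the
distributed knowledge operator `D_A`. -/
inductive ESLForm (AP Ag Act Var : Type) : Type 1 where
  | fls  : ESLForm AP Ag Act Var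
  | atom : AP → ESLForm AP Ag Act Var
  | act  : Ag → Act → ESLForm AP Ag Act Var
  | neg  : ESLForm AP Ag Act Var → ESLForm AP Ag Act Var
  | or   : ESLForm AP Ag Act Var → ESLForm AP Ag Act Var → ESLForm AP Ag Act Var
  | exi  : Var → ESLForm AP Ag Act Var → ESLForm AP Ag Act Var
  | bind : Ag → Var → ESLForm AP Ag Act Var → ESLForm AP Ag Act Var
  | unbind : Ag → ESLForm AP Ag Act Var → ESLForm AP Ag Act Var
  | pathE : ESLPath AP Ag Act Var → ESLForm AP Ag Act Var
  | know : Set Ag → ESLForm AP Ag Act Var → ESLForm AP Ag Act Var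
/-- Path formulas of ESL. -/
inductive ESLPath (AP Ag Act Var : Type) : Type 1 where
  | state : ESLForm AP Ag Act Var → ESLPath AP Ag Act Var
  | neg   : ESLPath AP Ag Act Var → ESLPath AP Ag Act Var
  | or    : ESLPath AP Ag Act Var → ESLPath AP Ag Act Var → ESLPath AP Ag Act Var
  | next  : ESLPath AP Ag Act Var → ESLPath AP Ag Act Var
  | untl  : ESLPath AP Ag Act Var → ESLPath AP Ag Act Var → ESLPath AP Ag Act Var
end

mutual
/-- Semantics of ESL state formulas, at an initial path under an assignment. -/
def ESLsat [DecidableEq Ag] [DecidableEq Var] (I : ICGS S Ag Act AP)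
    (χ : Assign S Ag Act Var) (ρ : FPath S Ag Act) : ESLForm AP Ag Act Var → Prop
  | .fls => False
  | .atom p => I.val (I.toCGS.lastState ρ) p
  | .act a c => ∃ dec, ρ.2.getLast? = some dec ∧ dec a = c
  | .neg φ => ¬ ESLsat I χ ρ φ
  | .or φ φ' => ESLsat I χ ρ φ ∨ ESLsat I χ ρ φ'
  | .exi x φ =>
      ∃ σ : Strat S Ag Act, ESLsat I (Function.update χ (Sum.inr x) (some σ)) ρ φ
  | .bind a x φ => ESLsat I (Function.update χ (Sum.inl a) (χ (Sum.inr x))) ρ φ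
  | .unbind a φ => ESLsat I (Function.update χ (Sum.inl a) none) ρ φ
  | .pathE ψ => ∃ d ∈ outcomeFrom χ ρ, ESLsatP I χ ρ d 0 ψ
  | .know A φ => ∀ ρ' : FPath S Ag Act, (∀ a ∈ A, I.rel a ρ ρ') → ESLsat I χ ρ' φ
/-- Semantics of ESL path formulas, on the play extending `ρ` with decision
stream `d`, at position `i` (relative to the end of `ρ`). -/
def ESLsatP [DecidableEq Ag] [DecidableEq Var] (I : ICGS S Ag Act AP)
    (χ : Assign S Ag Act Var) (ρ : FPath S Ag Act) (d : ℕ → Ag → Act) (i : ℕ) :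
    ESLPath AP Ag Act Var → Prop
  | .state φ => ESLsat I χ (extFPath ρ d i) φ
  | .neg ψ => ¬ ESLsatP I χ ρ d i ψ
  | .or ψ ψ' => ESLsatP I χ ρ d i ψ ∨ ESLsatP I χ ρ d i ψ'
  | .next ψ => ESLsatP I χ ρ d (i + 1) ψ
  | .untl ψ ψ' => ∃ j, i ≤ j ∧ ESLsatP I χ ρ d j ψ' ∧
      ∀ k, i ≤ k → k < j → ESLsatP I χ ρ d k ψ
end

/-- `A X φ`, i.e. `¬ E X ¬φ`. -/
def AXf (φ : ESLForm AP Ag Act Var) : ESLForm AP Ag Act Var :=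
  .neg (.pathE (.next (.state (.neg φ))))

/-- `A G φ`, i.e. `¬ E (⊤ U ¬φ)`. -/
def AGf (φ : ESLForm AP Ag Act Var) : ESLForm AP Ag Act Var :=
  .neg (.pathE (.untl (.state (.neg .fls)) (.state (.neg φ))))

/-- Individual knowledge: `K_a φ = D_{\{a\}} φ`. -/
def Kf (a : Ag) (φ : ESLForm AP Ag Act Var) : ESLForm AP Ag Act Var :=
  .know {a} φ

/-- `AG ⋁_{c ∈ Act} K_{ak} AX p^{aa}_c`. -/
noncomputable def wUnifAux2 [Fintype Act] (ak aa : Ag) : ESLForm AP Ag Act Var :=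
  AGf ((Finset.univ.toList.map fun c : Act => Kf ak (AXf (.act aa c))).foldr .or .fls)

/-- The formula `AG ⋁_{c ∈ Act} K_a AX p^a_c` characterizing weak uniformity. -/
noncomputable def wUnifAux [Fintype Act] (a : Ag) : ESLForm AP Ag Act Var :=
  wUnifAux2 a a

/-- The assignment binding only agent `a`, to strategy `σ`. -/
def singleA [DecidableEq Ag] (a : Ag) (σ : Strat S Ag Act) : Assign S Ag Act Var :=
  fun l => match l with
    | Sum.inl b => if b = a then some σ else none
    | Sum.inr _ => none

/-- `σ` is weakly uniform for `a` in `ρ`: on every finite prefix `ρ'`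
(extending `ρ`) of an outcome of `[a ↦ σ]` from `ρ`, and every initial path
`ρ''` indistinguishable from `ρ'` for `a`, `σ(ρ') = σ(ρ'')`. -/
def weaklyUniform [DecidableEq Ag] (I : ICGS S Ag Act AP) (a : Ag)
    (σ : Strat S Ag Act) (ρ : FPath S Ag Act) : Prop :=
  ∀ d ∈ outcomeFrom (singleA a σ : Assign S Ag Act PUnit) ρ,
    ∀ (i : ℕ) (ρ'' : FPath S Ag Act),
      I.rel a (extFPath ρ d i) ρ'' → σ (extFPath ρ d i) = σ ρ''

/-- Prefix a formula with unbinding operators for all agents in `l`. -/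
def unbindAll (l : List Ag) (φ : ESLForm AP Ag Act Var) : ESLForm AP Ag Act Var :=
  l.foldr .unbind φ

section AuxLemmas

lemma extFPath_zero (ρ : FPath S Ag Act) (d : ℕ → Ag → Act) : extFPath ρ d 0 = ρ := by
  simp [extFPath]

lemma mem_outcome_iff' [DecidableEq Ag] {Var : Type} (a : Ag) (σ : Strat S Ag Act)
    (χ : Assign S Ag Act Var) (h : ∀ b, χ (Sum.inl b) = if b = a then some σ else none)
    (ρ : FPath S Ag Act) (d : ℕ → Ag → Act) :
    d ∈ outcomeFrom χ ρ ↔ ∀ k, d k a = σ (extFPath ρ d k) := by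
  constructor
  · intro hd k
    exact hd k a σ (by rw [h a]; simp)
  · intro hd k b σ' hb
    rw [h b] at hb
    by_cases hba : b = a
    · rw [if_pos hba] at hb
      cases hb; subst hba; exact hd k
    · simp [hba] at hb

/-- The prefix lists of a canonical play in which `a` follows `σ`. -/
noncomputable def mkL [DecidableEq Ag] [Nonempty Act] (a : Ag) (σ : Strat S Ag Act)
    (ρ : FPath S Ag Act) : ℕ → List (Ag → Act)
  | 0 => []
  | k+1 => mkL a σ ρ k ++
      [fun b => if b = a then σ (ρ.1, ρ.2 ++ mkL a σ ρ k) else Classical.arbitrary Act]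

/-- A canonical play in which `a` follows `σ`. -/
noncomputable def mkD [DecidableEq Ag] [Nonempty Act] (a : Ag) (σ : Strat S Ag Act)
    (ρ : FPath S Ag Act) : ℕ → Ag → Act :=
  fun k b => if b = a then σ (ρ.1, ρ.2 ++ mkL a σ ρ k) else Classical.arbitrary Act

lemma mkL_eq [DecidableEq Ag] [Nonempty Act] (a : Ag) (σ : Strat S Ag Act)
    (ρ : FPath S Ag Act) (k : ℕ) :
    (List.ofFn fun t : Fin k => mkD a σ ρ t) = mkL a σ ρ k := by
  induction k with
  | zero => simp [mkL]
  | succ k ih =>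
    rw [List.ofFn_succ']
    simp only [Fin.coe_castSucc, Fin.val_last, List.concat_eq_append, ih, mkL, mkD]
    rfl

lemma mkD_mem [DecidableEq Ag] [Nonempty Act] (a : Ag) (σ : Strat S Ag Act)
    {Var : Type} (χ : Assign S Ag Act Var)
    (h : ∀ b, χ (Sum.inl b) = if b = a then some σ else none) (ρ : FPath S Ag Act) :
    mkD a σ ρ ∈ outcomeFrom χ ρ := by
  rw [mem_outcome_iff' a σ χ h]
  intro k
  show (if a = a then _ else _) = _
  rw [if_pos rfl, extFPath, mkL_eq]

lemma sat_foldr_or [DecidableEq Ag] [DecidableEq Var] (I : ICGS S Ag Act AP)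
    (χ : Assign S Ag Act Var) (ρ : FPath S Ag Act) (l : List (ESLForm AP Ag Act Var)) :
    ESLsat I χ ρ (l.foldr .or .fls) ↔ ∃ φ ∈ l, ESLsat I χ ρ φ := by
  induction l with
  | nil => simp [ESLsat]
  | cons φ l ih => simp [ESLsat, ih]

lemma sat_know [DecidableEq Ag] [DecidableEq Var] (I : ICGS S Ag Act AP)
    (χ : Assign S Ag Act Var) (ρ : FPath S Ag Act) (A : Set Ag)
    (φ : ESLForm AP Ag Act Var) :
    ESLsat I χ ρ (.know A φ) ↔
      ∀ ρ' : FPath S Ag Act, (∀ a ∈ A, I.rel a ρ ρ') → ESLsat I χ ρ' φ := by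
  simp [ESLsat]

lemma sat_AG [DecidableEq Ag] [DecidableEq Var] (I : ICGS S Ag Act AP)
    (χ : Assign S Ag Act Var) (ρ : FPath S Ag Act) (φ : ESLForm AP Ag Act Var) :
    ESLsat I χ ρ (AGf φ) ↔
      ∀ d ∈ outcomeFrom χ ρ, ∀ j, ESLsat I χ (extFPath ρ d j) φ := by
  simp only [AGf, ESLsat, ESLsatP]
  constructor
  · intro h d hd j
    by_contra hj
    exact h ⟨d, hd, j, Nat.zero_le j, hj, fun k _ _ => by simp [ESLsat]⟩
  · rintro h ⟨d, hd, j, -, hj, -⟩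
    exact hj (h d hd j)

lemma sat_AX_act [DecidableEq Ag] [DecidableEq Var] [Nonempty Act]
    (I : ICGS S Ag Act AP) (a : Ag) (σ : Strat S Ag Act)
    (χ : Assign S Ag Act Var) (h : ∀ b, χ (Sum.inl b) = if b = a then some σ else none)
    (ρ'' : FPath S Ag Act) (c : Act) :
    ESLsat I χ ρ'' (AXf (.act a c)) ↔ σ ρ'' = c := by
  simp only [AXf, ESLsat, ESLsatP]
  push_neg
  constructor
  · intro h'
    have hm := mkD_mem a σ χ h ρ''
    have := h' _ hm
    obtain ⟨dec, hdec, hc⟩ := this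
    have h0 : (mkD a σ ρ'') 0 a = σ (extFPath ρ'' (mkD a σ ρ'') 0) :=
      (mem_outcome_iff' a σ χ h ρ'' _).mp hm 0
    rw [extFPath_zero] at h0
    have : (extFPath ρ'' (mkD a σ ρ'') 1).2.getLast? = some ((mkD a σ ρ'') 0) := by
      simp [extFPath, List.ofFn_succ]
    rw [this] at hdec
    cases hdec
    rw [← hc, h0]
  · intro hc d hd
    have h0 : d 0 a = σ (extFPath ρ'' d 0) := (mem_outcome_iff' a σ χ h ρ'' d).mp hd 0
    rw [extFPath_zero] at h0
    refine ⟨d 0, ?_, by rw [h0, hc]⟩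
    simp [extFPath, List.ofFn_succ]

lemma wUnif_char [DecidableEq Ag] [DecidableEq Var] [Fintype Act] [Nonempty Act]
    (I : ICGS S Ag Act AP) (a : Ag) (σ : Strat S Ag Act) (ρ : FPath S Ag Act)
    (χ : Assign S Ag Act Var)
    (h : ∀ b, χ (Sum.inl b) = if b = a then some σ else none) :
    ESLsat I χ ρ (wUnifAux a) ↔ weaklyUniform I a σ ρ := by
  have hout : ∀ d, d ∈ outcomeFrom χ ρ ↔
      d ∈ outcomeFrom (singleA a σ : Assign S Ag Act PUnit) ρ := by
    intro d
    rw [mem_outcome_iff' a σ χ h, mem_outcome_iff' a σ _ (fun b => rfl)]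
  rw [wUnifAux, wUnifAux2, sat_AG, weaklyUniform]
  constructor
  · intro H d hd i ρ'' hrel
    have H' := H d ((hout d).mpr hd) i
    rw [sat_foldr_or] at H'
    obtain ⟨φ, hφ, hsat⟩ := H'
    rw [List.mem_map] at hφ
    obtain ⟨c, _, rfl⟩ := hφ
    rw [Kf, sat_know] at hsat
    have h1 : σ ρ'' = c := by
      rw [← sat_AX_act I a σ χ h ρ'' c]
      exact hsat ρ'' (fun b hb => by rw [Set.mem_singleton_iff] at hb; subst hb; exact hrel)
    have h2 : σ (extFPath ρ d i) = c := by
      rw [← sat_AX_act I a σ χ h _ c]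
      exact hsat _ (fun b hb => by
        rw [Set.mem_singleton_iff] at hb; subst hb; exact (I.rel_equiv b).refl _)
    rw [h1, h2]
  · intro H d hd j
    rw [sat_foldr_or]
    refine ⟨Kf a (AXf (.act a (σ (extFPath ρ d j)))), ?_, ?_⟩
    · rw [List.mem_map]
      exact ⟨σ (extFPath ρ d j), by simp, rfl⟩
    · rw [Kf, sat_know]
      intro ρ'' hrel
      rw [sat_AX_act I a σ χ h ρ'']
      exact (H d ((hout d).mp hd) j ρ'' (hrel a rfl)).symm

lemma sat_unbindAll [DecidableEq Ag] [DecidableEq Var] (I : ICGS S Ag Act AP)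
    (ρ : FPath S Ag Act) (l : List Ag) (φ : ESLForm AP Ag Act Var)
    (χ : Assign S Ag Act Var) :
    ESLsat I χ ρ (unbindAll l φ) ↔
      ESLsat I (l.foldl (fun χ b => Function.update χ (Sum.inl b) none) χ) ρ φ := by
  induction l generalizing χ with
  | nil => rfl
  | cons b l ih =>
    show ESLsat I χ ρ (.unbind b (unbindAll l φ)) ↔ _
    simp only [ESLsat, ih, List.foldl_cons]

lemma foldl_unbind_val [DecidableEq Ag] [DecidableEq Var] (l : List Ag)
    (χ : Assign S Ag Act Var) (c : Ag) :
    (l.foldl (fun χ b => Function.update χ (Sum.inl b) none) χ) (Sum.inl c) =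
      if c ∈ l then none else χ (Sum.inl c) := by
  induction l generalizing χ with
  | nil => simp
  | cons b l ih =>
    simp only [List.foldl_cons, ih, List.mem_cons]
    by_cases hc : c ∈ l
    · simp [hc]
    · simp only [hc, if_false, or_false]
      by_cases hcb : c = b
      · subst hcb; simp
      · rw [if_neg hcb, Function.update_of_ne (by simpa using hcb)]

end AuxLemmas

/-- for any assignment `χ`, `σ` is weakly uniform for `a` in `ρ`
iff `I, χ[a ↦ σ], ρ ⊨ (a_1,?)…(a_k,?) AG ⋁_{c ∈ Act} K_a AX p^a_c`, where
`{a_1,…,a_k} = Ag ∖ {a}`. -/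
theorem statement_12 [DecidableEq Ag] [DecidableEq Var] [Fintype Ag]
    [Fintype Act] [Nonempty Act]
    (I : ICGS S Ag Act AP) (ρ : FPath S Ag Act) (χ : Assign S Ag Act Var)
    (a : Ag) (σ : Strat S Ag Act) :
    weaklyUniform I a σ ρ ↔
      ESLsat I (Function.update χ (Sum.inl a) (some σ)) ρ
        (unbindAll ((Finset.univ.erase a).toList) (wUnifAux a)) := by
  
  rw [sat_unbindAll]
  rw [wUnif_char I a σ ρ _ ?_]
  intro b
  rw [foldl_unbind_val]
  by_cases hb : b = a
  · subst hb
    simp [Finset.mem_toList]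
  · simp only [Finset.mem_toList, Finset.mem_erase, hb, Finset.mem_univ, and_true,
      not_false_iff, if_true, if_neg hb]
    simp [hb]
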